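/- arXiv:2507.06940 — 9 statements merged into one kernel-verified Lean document; each statement's English description precedes it below -/
import Mathlib

section
/- Let A be a Poisson algebra which is a UFD (as a commutative ring), and let f, g be regular elements of A with gcd(f,g) = 1. If fg is Poisson normal, then both f and g are Poisson normal. -/
def IsPoissonBr {A : Type*} [CommRing A] (br : A → A → A) : Prop :=
  (∀ a b c, br (a + b) c = br a c + br b c) ∧
  (∀ a b c, br a (b + c) = br a b + br a c) ∧
  (∀ a, br a a = 0) ∧
  (∀ a b, br a b = - br b a) ∧
  (∀ a b c, br a (br b c) + br b (br c a) + br c (br a b) = 0) ∧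
  (∀ a b c, br a (b * c) = br a b * c + b * br a c)

/-- In a Poisson UFD, if `f, g` are regular (nonzero) elements with `gcd(f,g) = 1`
and `fg` is Poisson normal, then both `f` and `g` are Poisson normal.
(Poisson normality of `f` is expressed as `f ∣ {a, f}` for all `a`.) -/
theorem stmt2 {A : Type*} [CommRing A] [IsDomain A] [UniqueFactorizationMonoid A]
    (br : A → A → A) (h : IsPoissonBr br)
    (f g : A) (hf : f ≠ 0) (hg : g ≠ 0) (hrel : IsRelPrime f g)
    (hfg : ∀ a, f * g ∣ br a (f * g)) :
    (∀ a, f ∣ br a f) ∧ (∀ a, g ∣ br a g) := by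
  obtain ⟨_, _, _, _, _, leib⟩ := h
  constructor
  · intro a
    have hd : f ∣ br a f * g + f * br a g := by
      have := (dvd_mul_right f g).trans (hfg a)
      rw [leib a f g] at this
      exact this
    have : f ∣ br a f * g := (dvd_add_right (dvd_mul_right f (br a g))).mp
      (by rwa [add_comm] at hd)
    exact hrel.dvd_of_dvd_mul_right this
  · intro a
    have hd : g ∣ br a f * g + f * br a g := by
      have := (dvd_mul_left g f).trans (hfg a)
      rw [leib a f g] at this
      exact this
    have : g ∣ f * br a g := (dvd_add_right (dvd_mul_left g (br a f))).mp hd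
    exact hrel.symm.dvd_of_dvd_mul_left this
end

section
/- Let A be a Poisson algebra which is a UFD, and let f, g be regular elements with fg Poisson normal. Then f is Poisson normal if and only if g is Poisson normal. -/
lemma stmt3_aux {A : Type*} [CommRing A] [IsDomain A]
    (br : A → A → A) (h : IsPoissonBr br)
    (f g : A) (hf : f ≠ 0)
    (hfg : ∀ a, f * g ∣ br a (f * g))
    (hF : ∀ a, f ∣ br a f) : ∀ a, g ∣ br a g := by
  intro a
  obtain ⟨u, hu⟩ := hF a
  obtain ⟨v, hv⟩ := hfg a
  have hl := h.2.2.2.2.2 a f g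
  rw [hu] at hl
  rw [hl] at hv
  have : f * (g * v) = f * (u * g + br a g) := by linear_combination -hv
  have h2 : g * v = u * g + br a g := mul_left_cancel₀ hf this
  exact ⟨v - u, by linear_combination -h2⟩

/-- In a Poisson UFD, if `f, g` are regular elements with `fg` Poisson normal,
then `f` is Poisson normal if and only if `g` is Poisson normal. -/
theorem stmt3 {A : Type*} [CommRing A] [IsDomain A] [UniqueFactorizationMonoid A]
    (br : A → A → A) (h : IsPoissonBr br)
    (f g : A) (hf : f ≠ 0) (hg : g ≠ 0)
    (hfg : ∀ a, f * g ∣ br a (f * g)) :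
    (∀ a, f ∣ br a f) ↔ (∀ a, g ∣ br a g) := by
  have hfg' : ∀ a, g * f ∣ br a (g * f) := by
    intro a; rw [mul_comm]; exact hfg a
  exact ⟨stmt3_aux br h f g hf hfg, stmt3_aux br h g f hg hfg'⟩
end

section
/- Let A be a Poisson algebra which is a UFD, and let f, g be regular Poisson normal elements of A. Then lcm(f,g) and gcd(f,g) are Poisson normal. -/
private lemma pn_mul {A : Type*} [CommRing A] {br : A → A → A} (h : IsPoissonBr br)
    {x y : A} (hx : ∀ a, x ∣ br a x) (hy : ∀ a, y ∣ br a y) :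
    ∀ a, x * y ∣ br a (x * y) := by
  intro a
  rw [h.2.2.2.2.2 a x y]
  exact dvd_add (mul_dvd_mul_right (hx a) y)
    (mul_dvd_mul_left x (hy a))

private lemma pn_div {A : Type*} [CommRing A] [IsDomain A] {br : A → A → A}
    (h : IsPoissonBr br) {x z : A} (hx : x ≠ 0) (hxn : ∀ a, x ∣ br a x)
    (hxz : ∀ a, x * z ∣ br a (x * z)) : ∀ a, z ∣ br a z := by
  intro a
  obtain ⟨w, hw⟩ := hxn a
  have h1 : x * z ∣ x * (w * z + br a z) := by
    have := hxz a
    rw [h.2.2.2.2.2 a x z, hw] at this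
    rwa [mul_add, ← mul_assoc]
  have h2 : z ∣ w * z + br a z := (mul_dvd_mul_iff_left hx).mp h1
  simpa using dvd_sub h2 (dvd_mul_left z w)

private lemma pn_assoc {A : Type*} [CommRing A] {br : A → A → A} (h : IsPoissonBr br)
    {x y : A} (hx : ∀ a, x ∣ br a x) (hxy : Associated x y) :
    ∀ a, y ∣ br a y := by
  obtain ⟨u, rfl⟩ := hxy
  have hu : ∀ a, (u : A) ∣ br a (u : A) := fun a => (u.isUnit).dvd
  exact pn_mul h hx hu

/-- In a Poisson UFD, if `f, g` are regular Poisson normal elements, then any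
least common multiple and any greatest common divisor of `f` and `g` is
Poisson normal. -/
theorem stmt4 {A : Type*} [CommRing A] [IsDomain A] [UniqueFactorizationMonoid A]
    (br : A → A → A) (h : IsPoissonBr br)
    (f g : A) (hf : f ≠ 0) (hg : g ≠ 0)
    (hfn : ∀ a, f ∣ br a f) (hgn : ∀ a, g ∣ br a g) :
    (∀ m : A, (f ∣ m ∧ g ∣ m ∧ ∀ e, f ∣ e → g ∣ e → m ∣ e) → ∀ a, m ∣ br a m) ∧
    (∀ d : A, (d ∣ f ∧ d ∣ g ∧ ∀ e, e ∣ f → e ∣ g → e ∣ d) → ∀ a, d ∣ br a d) := by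
  have lcm_part : ∀ m : A, (f ∣ m ∧ g ∣ m ∧ ∀ e, f ∣ e → g ∣ e → m ∣ e) →
      ∀ a, m ∣ br a m := by
    rintro m ⟨⟨u, rfl⟩, ⟨v, hv⟩, hlcm⟩ a
    apply hlcm
    · rw [h.2.2.2.2.2 a f u]
      exact dvd_add (Dvd.dvd.mul_right (hfn a) u) (Dvd.intro _ rfl)
    · rw [hv, h.2.2.2.2.2 a g v]
      exact dvd_add (Dvd.dvd.mul_right (hgn a) v) (Dvd.intro _ rfl)
  refine ⟨lcm_part, ?_⟩
  rintro d ⟨hdf, hdg, hgcd⟩ a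
  letI : NormalizationMonoid A := UniqueFactorizationMonoid.normalizationMonoid.toNormalizationMonoid
  letI : GCDMonoid A := UniqueFactorizationMonoid.toGCDMonoid A
  have hlcm_n : ∀ a, lcm f g ∣ br a (lcm f g) :=
    lcm_part _ ⟨dvd_lcm_left f g, dvd_lcm_right f g, fun e he1 he2 => lcm_dvd he1 he2⟩
  have hfg : ∀ a, f * g ∣ br a (f * g) := pn_mul h hfn hgn
  have assoc1 : Associated (f * g) (lcm f g * gcd f g) := by
    rw [mul_comm (lcm f g)]
    exact (gcd_mul_lcm f g).symm
  have hgl := pn_assoc h hfg assoc1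
  have hlne : lcm f g ≠ 0 := by
    rw [Ne, lcm_eq_zero_iff]
    tauto
  have hgcd_n : ∀ a, gcd f g ∣ br a (gcd f g) :=
    pn_div h hlne hlcm_n hgl
  exact pn_assoc h hgcd_n
    (associated_of_dvd_dvd (hgcd _ (gcd_dvd_left f g) (gcd_dvd_right f g))
      (dvd_gcd hdf hdg)) a
end

section
/- Let A be a Poisson domain graded by an ordered abelian group G, and let f ∈ A be a nonzero Poisson normal element written as f = f_1 + ... + f_m with f_i homogeneous of distinct degrees. Then each nonzero f_i is Poisson normal and δ_{f_i} = δ_f. -/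
set_option linter.unusedSectionVars false
open scoped Classical

section Aux
variable {G A : Type*} [AddCommGroup G] [LinearOrder G] [IsOrderedAddMonoid G] [CommRing A] [IsDomain A]
  (𝒜 : G → AddSubgroup A) [GradedRing 𝒜]

lemma proj_sum' {ι : Type*} (s : Finset ι) (x : ι → A) (w : G) :
    (DirectSum.decompose 𝒜 (∑ i ∈ s, x i) w : A) = ∑ i ∈ s, (DirectSum.decompose 𝒜 (x i) w : A) := by
  rw [DirectSum.decompose_sum, DFinsupp.finset_sum_apply]
  exact map_sum ((𝒜 w).subtype) _ s

lemma mem_single' {x : A} {g w : G} (hx : x ∈ 𝒜 g) :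
    (DirectSum.decompose 𝒜 x w : A) = if g = w then x else 0 := by
  split
  · next h => subst h; exact DirectSum.decompose_of_mem_same 𝒜 hx
  · next h => exact DirectSum.decompose_of_mem_ne 𝒜 hx h

/-- componentwise equality for sums of homogeneous elements of distinct degrees -/
lemma comp_eq' {m : ℕ} (e : Fin m → G) (he : Function.Injective e)
    (x y : Fin m → A) (hx : ∀ i, x i ∈ 𝒜 (e i)) (hy : ∀ i, y i ∈ 𝒜 (e i))
    (hsum : ∑ i, x i = ∑ i, y i) : ∀ j, x j = y j := by
  intro j
  have key : ∀ z : Fin m → A, (∀ i, z i ∈ 𝒜 (e i)) →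
      (DirectSum.decompose 𝒜 (∑ i, z i) (e j) : A) = z j := by
    intro z hz
    rw [proj_sum']
    rw [Finset.sum_eq_single j]
    · exact DirectSum.decompose_of_mem_same 𝒜 (hz j)
    · intro i _ hij
      exact DirectSum.decompose_of_mem_ne 𝒜 (hz i) (fun hh => hij (he hh))
    · intro habs; exact absurd (Finset.mem_univ j) habs
  rw [← key x hx, ← key y hy, hsum]

/-- component of `u * ∑ fc i` at an "extreme" degree -/
lemma comp_prod' {m : ℕ} (d : Fin m → G) (fc : Fin m → A) (hmem : ∀ i, fc i ∈ 𝒜 (d i))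
    (u : A) (w : G) (h₀ : G)
    (i₀ : Fin m)
    (huniq : ∀ h ∈ DFinsupp.support (DirectSum.decompose 𝒜 u), ∀ i : Fin m, fc i ≠ 0 →
       h + d i = w → h = h₀ ∧ i = i₀)
    (hw : h₀ + d i₀ = w) :
    (DirectSum.decompose 𝒜 (u * (∑ i, fc i)) w : A) =
      (DirectSum.decompose 𝒜 u h₀ : A) * fc i₀ := by
  classical
  set D := DFinsupp.support (DirectSum.decompose 𝒜 u) with hDdef
  have hu : u = ∑ h ∈ D, (DirectSum.decompose 𝒜 u h : A) :=
    (DirectSum.sum_support_decompose 𝒜 u).symm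
  conv_lhs => rw [hu, Finset.sum_mul_sum]
  rw [proj_sum']
  have hterm : ∀ h ∈ D,
      (DirectSum.decompose 𝒜 (∑ i, (DirectSum.decompose 𝒜 u h : A) * fc i) w : A)
        = ∑ i, if h + d i = w then (DirectSum.decompose 𝒜 u h : A) * fc i else 0 := by
    intro h _
    rw [proj_sum']
    refine Finset.sum_congr rfl (fun i _ => ?_)
    exact mem_single' 𝒜 (SetLike.mul_mem_graded (SetLike.coe_mem _) (hmem i))
  rw [Finset.sum_congr rfl hterm]
  -- now a double sum of ites
  by_cases h₀D : h₀ ∈ D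
  case neg =>
    -- u's component at h₀ is 0, and all terms vanish
    have hz : (DirectSum.decompose 𝒜 u h₀ : A) = 0 := by
      rw [hDdef] at h₀D
      simpa using DFinsupp.notMem_support_iff.mp h₀D
    rw [hz, zero_mul]
    refine Finset.sum_eq_zero (fun h hD => Finset.sum_eq_zero (fun i _ => ?_))
    split
    · next heq =>
      by_cases hfi : fc i = 0
      · rw [hfi, mul_zero]
      · exact absurd ((huniq h hD i hfi heq).1 ▸ hD) h₀D
    · rfl
  case pos =>
    rw [Finset.sum_eq_single h₀]
    · rw [Finset.sum_eq_single i₀]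
      · rw [if_pos hw]
      · intro i _ hii
        split
        · next heq =>
          by_cases hfi : fc i = 0
          · rw [hfi, mul_zero]
          · exact absurd ((huniq h₀ h₀D i hfi heq).2) hii
        · rfl
      · intro habs; exact absurd (Finset.mem_univ i₀) habs
    · intro h hD hh
      refine Finset.sum_eq_zero (fun i _ => ?_)
      split
      · next heq =>
        by_cases hfi : fc i = 0
        · rw [hfi, mul_zero]
        · exact absurd ((huniq h hD i hfi heq).1) hh
      · rfl
    · intro habs; exact absurd h₀D habs

end Aux

section Main
variable {G A : Type*} [AddCommGroup G] [LinearOrder G] [IsOrderedAddMonoid G] [CommRing A] [IsDomain A]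
  (𝒜 : G → AddSubgroup A) [GradedRing 𝒜]

lemma key' (br : A → A → A) (h : IsPoissonBr br)
    (hgr : ∀ (g h' : G) (a b : A), a ∈ 𝒜 g → b ∈ 𝒜 h' → br a b ∈ 𝒜 (g + h'))
    (m : ℕ) (d : Fin m → G) (hd : Function.Injective d)
    (fc : Fin m → A) (hmem : ∀ i, fc i ∈ 𝒜 (d i))
    (f : A) (hfdef : f = ∑ i, fc i) (hf0 : f ≠ 0)
    (δ : A → A) (hδ : ∀ a, br a f = δ a * f)
    (g : G) (a : A) (ha : a ∈ 𝒜 g) :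
    ∀ i, br a (fc i) = δ a * fc i := by
  classical
  obtain ⟨hadd1, hadd2, -, -, -, -⟩ := h
  have hbr0 : br a 0 = 0 := by
    have h0 := hadd2 a 0 0
    rw [add_zero] at h0
    exact left_eq_add.mp h0
  have hbrsum : br a f = ∑ i, br a (fc i) := by
    rw [hfdef]
    exact map_sum (AddMonoidHom.mk' (br a) (hadd2 a)) fc Finset.univ
  set u := δ a with hudef
  -- Step 1: δ a ∈ 𝒜 g
  have hg : u ∈ 𝒜 g := by
    by_cases hu0 : u = 0
    · rw [hu0]; exact zero_mem _
    set D := DFinsupp.support (DirectSum.decompose 𝒜 u) with hDdef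
    have hD : D.Nonempty := by
      rw [Finset.nonempty_iff_ne_empty]
      intro hE
      apply hu0
      rw [← DirectSum.sum_support_decompose 𝒜 u, ← hDdef, hE, Finset.sum_empty]
    set T := Finset.univ.filter (fun i => fc i ≠ 0) with hTdef
    have hT : T.Nonempty := by
      rw [Finset.nonempty_iff_ne_empty]
      intro hE
      apply hf0
      rw [hfdef]
      refine Finset.sum_eq_zero (fun i _ => ?_)
      by_contra hfi
      have : i ∈ T := by rw [hTdef]; simp [hfi]
      rw [hE] at this
      exact absurd this (Finset.notMem_empty i)
    -- generic extreme-degree argument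
    have hbound : ∀ h₀ ∈ D, ∀ i₀ ∈ T,
        (∀ h ∈ D, ∀ i : Fin m, fc i ≠ 0 → h + d i = h₀ + d i₀ → h = h₀ ∧ i = i₀) →
        ∃ j : Fin m, fc j ≠ 0 ∧ g + d j = h₀ + d i₀ := by
      intro h₀ h₀D i₀ hi₀T huniq
      have hfi₀ : fc i₀ ≠ 0 := by
        rw [hTdef] at hi₀T
        exact (Finset.mem_filter.mp hi₀T).2
      have hcomp := comp_prod' 𝒜 d fc hmem u (h₀ + d i₀) h₀ i₀ huniq rfl
      have huh : (DirectSum.decompose 𝒜 u h₀ : A) ≠ 0 := by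
        intro hz
        rw [hDdef] at h₀D
        exact (DFinsupp.mem_support_iff.mp h₀D) (by ext; simpa using hz)
      have hne : (DirectSum.decompose 𝒜 (u * ∑ i, fc i) (h₀ + d i₀) : A) ≠ 0 := by
        rw [hcomp]; exact mul_ne_zero huh hfi₀
      rw [← hfdef, ← hδ a, hbrsum, proj_sum'] at hne
      obtain ⟨j, -, hj⟩ := Finset.exists_ne_zero_of_sum_ne_zero hne
      rw [mem_single' 𝒜 (hgr g (d j) a (fc j) ha (hmem j))] at hj
      by_cases hcond : g + d j = h₀ + d i₀
      · refine ⟨j, ?_, hcond⟩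
        intro hz
        rw [if_pos hcond, hz, hbr0] at hj
        exact hj rfl
      · rw [if_neg hcond] at hj
        exact absurd rfl hj
    -- max bound
    obtain ⟨imax, himaxT, himax⟩ := Finset.exists_max_image T d hT
    have hmaxle : D.max' hD ≤ g := by
      have huniq : ∀ h ∈ D, ∀ i : Fin m, fc i ≠ 0 → h + d i = D.max' hD + d imax →
          h = D.max' hD ∧ i = imax := by
        intro h hDh i hfi heq
        have h1 : h ≤ D.max' hD := Finset.le_max' D h hDh
        have h2 : d i ≤ d imax := himax i (by rw [hTdef]; simp [hfi])
        have hh : h = D.max' hD := by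
          by_contra hne
          have : h + d i < D.max' hD + d imax :=
            add_lt_add_of_lt_of_le (lt_of_le_of_ne h1 hne) h2
          rw [heq] at this
          exact lt_irrefl _ this
        refine ⟨hh, hd ?_⟩
        rw [hh] at heq
        exact add_left_cancel heq
      obtain ⟨j, hfj, hw⟩ := hbound (D.max' hD) (D.max'_mem hD) imax himaxT huniq
      have hdj : d j ≤ d imax := himax j (by rw [hTdef]; simp [hfj])
      have hle2 : D.max' hD + d j ≤ D.max' hD + d imax := add_le_add_right hdj _
      rw [← hw] at hle2
      exact le_of_add_le_add_right hle2
    -- min bound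
    obtain ⟨imin, himinT, himin⟩ := Finset.exists_min_image T d hT
    have hminge : g ≤ D.min' hD := by
      have huniq : ∀ h ∈ D, ∀ i : Fin m, fc i ≠ 0 → h + d i = D.min' hD + d imin →
          h = D.min' hD ∧ i = imin := by
        intro h hDh i hfi heq
        have h1 : D.min' hD ≤ h := Finset.min'_le D h hDh
        have h2 : d imin ≤ d i := himin i (by rw [hTdef]; simp [hfi])
        have hh : h = D.min' hD := by
          by_contra hne
          have : D.min' hD + d imin < h + d i :=
            add_lt_add_of_lt_of_le (lt_of_le_of_ne h1 (Ne.symm hne)) h2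
          rw [heq] at this
          exact lt_irrefl _ this
        refine ⟨hh, hd ?_⟩
        rw [hh] at heq
        exact add_left_cancel heq
      obtain ⟨j, hfj, hw⟩ := hbound (D.min' hD) (D.min'_mem hD) imin himinT huniq
      have hdj : d imin ≤ d j := himin j (by rw [hTdef]; simp [hfj])
      have hle2 : D.min' hD + d imin ≤ D.min' hD + d j := add_le_add_right hdj _
      rw [← hw] at hle2
      exact le_of_add_le_add_right hle2
    have hall : ∀ h ∈ D, h = g := fun h hh =>
      le_antisymm (le_trans (Finset.le_max' D h hh) hmaxle)
        (le_trans hminge (Finset.min'_le D h hh))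
    rw [← DirectSum.sum_support_decompose 𝒜 u, ← hDdef]
    refine sum_mem (fun h hh => ?_)
    rw [← hall h hh]
    exact SetLike.coe_mem _
  -- Step 2: componentwise equality
  refine comp_eq' 𝒜 (fun i => g + d i) (fun i j hij => hd (add_left_cancel hij))
    (fun i => br a (fc i)) (fun i => u * fc i)
    (fun i => hgr g (d i) a (fc i) ha (hmem i))
    (fun i => SetLike.mul_mem_graded hg (hmem i)) ?_
  rw [← hbrsum, ← Finset.mul_sum, ← hfdef, hδ a]

end Main

/-- Let `A` be a Poisson domain graded by an ordered abelian group `G` (graded as a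
ring via `𝒜` and with the bracket adding degrees). If a nonzero Poisson normal
element `f` (with log-ozone derivation `δ`, i.e. `{a,f} = δ(a)·f`) is written as
`f = f_1 + ⋯ + f_m` with `f_i` homogeneous of distinct degrees, then each nonzero
`f_i` is Poisson normal with `δ_{f_i} = δ_f`. -/
theorem stmt6 {G A : Type*} [AddCommGroup G] [LinearOrder G] [IsOrderedAddMonoid G] [CommRing A] [IsDomain A]
    (𝒜 : G → AddSubgroup A) [GradedRing 𝒜]
    (br : A → A → A) (h : IsPoissonBr br)
    (hgr : ∀ (g h' : G) (a b : A), a ∈ 𝒜 g → b ∈ 𝒜 h' → br a b ∈ 𝒜 (g + h'))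
    (m : ℕ) (d : Fin m → G) (hd : Function.Injective d)
    (fc : Fin m → A) (hmem : ∀ i, fc i ∈ 𝒜 (d i))
    (f : A) (hfdef : f = ∑ i, fc i) (hf0 : f ≠ 0)
    (δ : A → A) (hδ : ∀ a, br a f = δ a * f) :
    ∀ i, fc i ≠ 0 → ∀ a, br a (fc i) = δ a * fc i := by
  classical
  intro i _ a
  have hkey : ∀ (g : G) (b : A), b ∈ 𝒜 g → ∀ j, br b (fc j) = δ b * fc j :=
    fun g b hb => key' 𝒜 br h hgr m d hd fc hmem f hfdef hf0 δ hδ g b hb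
  set S := DFinsupp.support (DirectSum.decompose 𝒜 a) with hSdef
  have ha : a = ∑ g ∈ S, (DirectSum.decompose 𝒜 a g : A) :=
    (DirectSum.sum_support_decompose 𝒜 a).symm
  have hbrfst : ∀ x : A, br a x = ∑ g ∈ S, br ((DirectSum.decompose 𝒜 a g : A)) x := by
    intro x
    conv_lhs => rw [ha]
    exact map_sum (AddMonoidHom.mk' (fun y => br y x) (fun b c => h.1 b c x)) _ S
  have hδa : δ a * f = (∑ g ∈ S, δ ((DirectSum.decompose 𝒜 a g : A))) * f := by
    rw [← hδ a, hbrfst f, Finset.sum_mul]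
    refine Finset.sum_congr rfl (fun g _ => ?_)
    exact hδ _
  have hδa' : δ a = ∑ g ∈ S, δ ((DirectSum.decompose 𝒜 a g : A)) :=
    mul_right_cancel₀ hf0 hδa
  rw [hbrfst (fc i), hδa', Finset.sum_mul]
  refine Finset.sum_congr rfl (fun g _ => ?_)
  exact hkey g _ (SetLike.coe_mem _) i
end

section
/- Let A = k[x_1, x_2] over a field k of characteristic p > 0 with Poisson bracket determined by {x_1, x_2} = x_1². Then the Poisson center of A equals k[x_1^p, x_2^p]. -/
open MvPolynomial Finsupp

def IsPoissonBracket (k : Type*) [CommSemiring k] {A : Type*} [CommRing A] [Algebra k A]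
    (br : A → A → A) : Prop :=
  (∀ a b c, br (a + b) c = br a c + br b c) ∧
  (∀ a b c, br a (b + c) = br a b + br a c) ∧
  (∀ (r : k) (a b : A), br (r • a) b = r • br a b) ∧
  (∀ (r : k) (a b : A), br a (r • b) = r • br a b) ∧
  (∀ a, br a a = 0) ∧
  (∀ a b, br a b = - br b a) ∧
  (∀ a b c, br a (br b c) + br b (br c a) + br c (br a b) = 0) ∧
  (∀ a b c, br a (b * c) = br a b * c + b * br a c)

lemma br_formula {k : Type*} [Field k]
    {br : MvPolynomial (Fin 2) k → MvPolynomial (Fin 2) k → MvPolynomial (Fin 2) k}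
    (h : IsPoissonBracket k br) (g u v : MvPolynomial (Fin 2) k)
    (hu : br g (X 0) = u) (hv : br g (X 1) = v) (f : MvPolynomial (Fin 2) k) :
    br g f = pderiv 0 f * u + pderiv 1 f * v := by
  obtain ⟨hadd, hadd', hsmul, hsmul', halt, hskew, hjac, hleib⟩ := h
  have h1 : br g 1 = 0 := by
    have := hleib g 1 1
    simp only [mul_one, one_mul] at this
    have h2 : br g 1 + br g 1 = br g 1 + 0 := by rw [add_zero, ← this]
    exact add_left_cancel h2
  induction f using MvPolynomial.induction_on with
  | C a =>
      have hC : (C a : MvPolynomial (Fin 2) k) = a • 1 := by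
        rw [smul_eq_C_mul, mul_one]
      rw [hC, hsmul', h1, smul_zero]
      simp
  | add q r hq hr =>
      rw [hadd', hq, hr, map_add, map_add]
      ring
  | mul_X q n hq =>
      have hXn : br g (X n) = pderiv 0 (X n) * u + pderiv 1 (X n) * v := by
        fin_cases n <;> simp [hu, hv]
      rw [hleib, hq, hXn, (pderiv 0).leibniz, (pderiv 1).leibniz]
      simp only [smul_eq_mul]
      ring

lemma sub_add_single (f : Fin 2 →₀ ℕ) (i : Fin 2) (h : f i ≠ 0) :
    f - single i 1 + single i 1 = f := by
  ext j
  rcases eq_or_ne j i with rfl | hj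
  · simp only [Finsupp.add_apply, Finsupp.tsub_apply, Finsupp.single_eq_same]
    omega
  · simp [Finsupp.tsub_apply, Finsupp.single_eq_of_ne' (Ne.symm hj)]

lemma support_dvd {k : Type*} [Field k] (p : ℕ) [CharP k p] {z : MvPolynomial (Fin 2) k}
    {i : Fin 2} (hz : pderiv i z = 0) {m : Fin 2 →₀ ℕ} (hm : m ∈ z.support) : p ∣ m i := by
  by_contra hnd
  have hmi : m i ≠ 0 := by rintro h0; exact hnd (h0 ▸ dvd_zero p)
  have hkey : coeff (m - single i 1) (pderiv i z) = coeff m z * (m i : k) := by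
    conv_lhs => rw [z.as_sum, map_sum]
    rw [coeff_sum]
    simp only [pderiv_monomial, coeff_monomial]
    rw [Finset.sum_eq_single_of_mem m hm]
    · simp
    · intro s hs hsm
      by_cases hsi : s i = 0
      · simp [hsi]
      · rw [if_neg]
        exact fun he =>
          hsm (by rw [← sub_add_single s i hsi, he, sub_add_single m i hmi])
  rw [hz] at hkey
  have hc : coeff m z ≠ 0 := MvPolynomial.mem_support_iff.mp hm
  have : (m i : k) = 0 := by
    rcases mul_eq_zero.mp hkey.symm with h' | h'
    · exact absurd h' hc
    · exact h'
  exact hnd ((CharP.cast_eq_zero_iff k p _).mp this)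

lemma mem_adjoin_of_dvd {k : Type*} [Field k] (p : ℕ) {z : MvPolynomial (Fin 2) k}
    (hz : ∀ m ∈ z.support, ∀ i, p ∣ m i) :
    z ∈ Algebra.adjoin k ({X 0 ^ p, X 1 ^ p} : Set (MvPolynomial (Fin 2) k)) := by
  nth_rewrite 1 [z.as_sum]
  apply Subalgebra.sum_mem
  intro m hm
  rw [monomial_eq]
  apply Subalgebra.mul_mem
  · exact Subalgebra.algebraMap_mem _ _
  · rw [Finsupp.prod]
    apply Subalgebra.prod_mem
    intro j hj
    obtain ⟨c, hc⟩ := hz m hm j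
    rw [hc, pow_mul]
    apply Subalgebra.pow_mem
    fin_cases j
    · exact Algebra.subset_adjoin (Set.mem_insert _ _)
    · exact Algebra.subset_adjoin (Set.mem_insert_of_mem _ rfl)

lemma pderiv_zero_of_mem_adjoin {k : Type*} [Field k] (p : ℕ) [CharP k p]
    {z : MvPolynomial (Fin 2) k}
    (hz : z ∈ Algebra.adjoin k ({X 0 ^ p, X 1 ^ p} : Set (MvPolynomial (Fin 2) k)))
    (i : Fin 2) : pderiv i z = 0 := by
  have hpz : ((p : k) : k) = 0 := CharP.cast_eq_zero k p
  have hpow : ∀ j : Fin 2, pderiv i ((X j : MvPolynomial (Fin 2) k) ^ p) = 0 := by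
    intro j
    rw [pderiv_pow]
    have : ((p : ℕ) : MvPolynomial (Fin 2) k) = 0 := by
      rw [← C_eq_coe_nat, CharP.cast_eq_zero k p, map_zero]
    rw [this, zero_mul, zero_mul]
  induction hz using Algebra.adjoin_induction with
  | mem x hx =>
      rcases hx with rfl | rfl
      · exact hpow 0
      · exact hpow 1
  | algebraMap r => simp [algebraMap_eq]
  | add x y _ _ hx hy => rw [map_add, hx, hy, add_zero]
  | mul x y _ _ hx hy => rw [(pderiv i).leibniz, hx, hy]; simp

/-- The Poisson Jordan plane: `A = k[x₁,x₂]` over a field of characteristic `p > 0`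
with bracket determined by `{x₁,x₂} = x₁²`. Its Poisson center is `k[x₁^p, x₂^p]`. -/
theorem stmt8 {k : Type*} [Field k] (p : ℕ) [CharP k p] (hp : 0 < p)
    (br : MvPolynomial (Fin 2) k → MvPolynomial (Fin 2) k → MvPolynomial (Fin 2) k)
    (h : IsPoissonBracket k br)
    (hX : br (X 0) (X 1) = X 0 ^ 2) :
    {z : MvPolynomial (Fin 2) k | ∀ a, br z a = 0} =
      ↑(Algebra.adjoin k ({X 0 ^ p, X 1 ^ p} : Set (MvPolynomial (Fin 2) k))) := by
  have hskew := h.2.2.2.2.2.1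
  have halt := h.2.2.2.2.1
  have hX10 : br (X 1) (X 0) = -(X 0 ^ 2) := by rw [hskew, hX]
  have hX2 : (X 0 : MvPolynomial (Fin 2) k) ^ 2 ≠ 0 := pow_ne_zero _ (X_ne_zero 0)
  ext z
  simp only [Set.mem_setOf_eq, SetLike.mem_coe]
  constructor
  · intro hz
    have h0 := br_formula h (X 0) 0 (X 0 ^ 2) (halt _) hX z
    have h1 := br_formula h (X 1) (-(X 0 ^ 2)) 0 hX10 (halt _) z
    have e0 : br (X 0) z = 0 := by rw [hskew, hz (X 0), neg_zero]
    have e1 : br (X 1) z = 0 := by rw [hskew, hz (X 1), neg_zero]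
    rw [e0, mul_zero, zero_add] at h0
    rw [e1, mul_zero, add_zero] at h1
    have hd1 : pderiv 1 z = 0 := by
      rcases mul_eq_zero.mp h0.symm with h' | h'
      · exact h'
      · exact absurd h' hX2
    have hd0 : pderiv 0 z = 0 := by
      rcases mul_eq_zero.mp h1.symm with h' | h'
      · exact h'
      · exact absurd (neg_eq_zero.mp h') hX2
    exact mem_adjoin_of_dvd p fun m hm i => by
      fin_cases i
      · exact support_dvd p hd0 hm
      · exact support_dvd p hd1 hm
  · intro hz a
    have hd0 := pderiv_zero_of_mem_adjoin p hz 0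
    have hd1 := pderiv_zero_of_mem_adjoin p hz 1
    have h0 := br_formula h (X 0) 0 (X 0 ^ 2) (halt _) hX z
    have h1 := br_formula h (X 1) (-(X 0 ^ 2)) 0 hX10 (halt _) z
    rw [hd0, hd1, zero_mul, zero_mul, add_zero] at h0 h1
    have hu : br z (X 0) = 0 := by rw [hskew, h0, neg_zero]
    have hv : br z (X 1) = 0 := by rw [hskew, h1, neg_zero]
    rw [br_formula h z 0 0 hu hv a, mul_zero, mul_zero, add_zero]
end

section
/- Let k have characteristic p > 0 and let c = (c_{ij}) be an n×n skew-symmetric matrix over k. For v = (v_1,...,v_n) ∈ ℕⁿ, the monomial x^v = x_1^{v_1}···x_n^{v_n} lies in the Poisson center of the skew-symmetric Poisson algebra P_c if and only if Σ_j c_{ij} v_j = 0 in k for all i (where v_j is taken modulo p). Consequently, the set M = {v ∈ ℕⁿ : c·(v mod p) = 0} is a submonoid of ℕⁿ and the Poisson center of P_c is spanned by {x^v : v ∈ M}. -/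
open MvPolynomial

section Aux

variable {k : Type*} [CommRing k] {A : Type*} [CommRing A] [Algebra k A]
  {br : A → A → A} (h : IsPoissonBracket k br)

/-- The map `a ↦ br a y` is a `k`-derivation. -/
noncomputable def Dfst (y : A) : Derivation k A A where
  toFun a := br a y
  map_add' a b := h.1 a b y
  map_smul' r a := h.2.2.1 r a y
  map_one_eq_zero' := by
    have hone : br (1 : A) y = br 1 y * 1 + 1 * br 1 y := by
      have := h.2.2.2.2.2.1 -- antisymm
      have hl := h.2.2.2.2.2.2.2 1 1 y
      calc br (1 : A) y = - br y 1 := h.2.2.2.2.2.1 1 y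
        _ = - br y (1 * 1) := by rw [one_mul]
        _ = -(br y 1 * 1 + 1 * br y 1) := by rw [h.2.2.2.2.2.2.2]
        _ = (- br y 1) * 1 + 1 * (- br y 1) := by ring
        _ = br 1 y * 1 + 1 * br 1 y := by rw [← h.2.2.2.2.2.1 1 y]
    have h2 : br (1 : A) y = br 1 y + br 1 y := by simpa using hone
    exact left_eq_add.mp h2
  leibniz' a b := by
    show br (a * b) y = a • br b y + b • br a y
    have hanti := h.2.2.2.2.2.1
    calc br (a * b) y = - br y (a * b) := hanti _ _
      _ = -(br y a * b + a * br y b) := by rw [h.2.2.2.2.2.2.2]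
      _ = a * (- br y b) + b * (- br y a) := by ring
      _ = a * br b y + b * br a y := by rw [← hanti, ← hanti]
      _ = a • br b y + b • br a y := by rw [smul_eq_mul, smul_eq_mul]

@[simp] lemma Dfst_apply (y a : A) : Dfst h y a = br a y := rfl

/-- The map `a ↦ br z a` is a `k`-derivation. -/
noncomputable def Dsnd (z : A) : Derivation k A A where
  toFun a := br z a
  map_add' a b := h.2.1 z a b
  map_smul' r a := h.2.2.2.1 r z a
  map_one_eq_zero' := by
    have hone : br z (1 : A) = br z 1 * 1 + 1 * br z 1 := by
      conv_lhs => rw [show (1 : A) = 1 * 1 by ring, h.2.2.2.2.2.2.2]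
    have h2 : br z (1 : A) = br z 1 + br z 1 := by simpa using hone
    exact left_eq_add.mp h2
  leibniz' a b := by
    show br z (a * b) = a • br z b + b • br z a
    rw [h.2.2.2.2.2.2.2, smul_eq_mul, smul_eq_mul]; ring

@[simp] lemma Dsnd_apply (z a : A) : Dsnd h z a = br z a := rfl

end Aux

section Aux2

variable {k : Type*} [Field k] {n : ℕ} (c : Fin n → Fin n → k)
  {br : MvPolynomial (Fin n) k → MvPolynomial (Fin n) k → MvPolynomial (Fin n) k}
  (h : IsPoissonBracket k br)
  (hX : ∀ i j, br (X i) (X j) = c i j • (X i * X j))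

include h hX in
lemma key_monomial (d : Fin n →₀ ℕ) (i : Fin n) :
    br (monomial d (1 : k)) (X i) =
      (∑ j, c j i * (d j : k)) • (monomial d 1 * X i) := by
  have hD : (Dfst h (X i) : Derivation k _ _) =
      mkDerivation k (fun j => c j i • (X j * X i)) := by
    apply derivation_ext
    intro j
    simp [hX]
  have : br (monomial d (1 : k)) (X i) = Dfst h (X i) (monomial d 1) := rfl
  rw [this, hD, mkDerivation_monomial, one_smul, Finsupp.sum]
  rw [Finset.sum_smul]
  rw [← Finset.sum_subset (Finset.subset_univ d.support)
    (by intro j _ hj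
        simp only [Finsupp.notMem_support_iff] at hj
        simp [hj])]
  refine Finset.sum_congr rfl fun j hj => ?_
  have hdj : 1 ≤ d j := Nat.one_le_iff_ne_zero.2 (Finsupp.mem_support_iff.1 hj)
  have hle : Finsupp.single j 1 ≤ d := by
    rw [Finsupp.single_le_iff]; exact hdj
  have hmon : (monomial (d - Finsupp.single j 1) ((d j : k)) : MvPolynomial (Fin n) k) * X j
      = (d j : k) • monomial d 1 := by
    rw [show (X j : MvPolynomial (Fin n) k) = monomial (Finsupp.single j 1) 1 from rfl,
      monomial_mul, tsub_add_cancel_of_le hle, mul_one, smul_monomial, smul_eq_mul, mul_one]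
  rw [smul_eq_mul, mul_smul_comm, ← mul_assoc, hmon, smul_mul_assoc, smul_smul, mul_comm (c j i)]

include h hX in
lemma mono_center (d : Fin n →₀ ℕ) (hc : ∀ i, ∑ j, c i j * (d j : k) = 0)
    (hskew : ∀ i j, c i j = - c j i) :
    ∀ a, br (monomial d (1 : k)) a = 0 := by
  have hzero : (Dsnd h (monomial d (1 : k)) : Derivation k _ _) = 0 := by
    apply derivation_ext
    intro i
    have : br (monomial d (1 : k)) (X i) =
        (∑ j, c j i * (d j : k)) • (monomial d 1 * X i) := key_monomial c h hX d i
    have hsum : (∑ j, c j i * (d j : k)) = 0 := by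
      have := hc i
      rw [← neg_eq_zero, ← Finset.sum_neg_distrib]
      rw [← this]
      refine Finset.sum_congr rfl fun j _ => ?_
      rw [hskew j i]; ring
    simp only [Dsnd_apply, this, hsum, zero_smul, Derivation.coe_zero, Pi.zero_apply]
  intro a
  have := congrArg (fun D : Derivation k (MvPolynomial (Fin n) k) (MvPolynomial (Fin n) k)
    => D a) hzero
  simpa using this

end Aux2

/-- Over a field of characteristic `p > 0`, a monomial `x^v` is in the Poisson center
of the skew-symmetric Poisson algebra `P_c` iff `Σ_j c_{ij} v_j = 0` in `k` for all `i`
(components taken mod `p` via the natural map `ℕ → k`). The set `M` of such exponent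
vectors is a submonoid of `ℕⁿ`, and the Poisson center is spanned by `{x^v : v ∈ M}`. -/
theorem stmt10 {k : Type*} [Field k] (p : ℕ) [CharP k p] (hp : 0 < p) (n : ℕ)
    (c : Fin n → Fin n → k)
    (hskew : ∀ i j, c i j = - c j i) (hdiag : ∀ i, c i i = 0)
    (br : MvPolynomial (Fin n) k → MvPolynomial (Fin n) k → MvPolynomial (Fin n) k)
    (h : IsPoissonBracket k br)
    (hX : ∀ i j, br (X i) (X j) = c i j • (X i * X j)) :
    (∀ v : Fin n → ℕ,
      (∀ a, br (monomial (Finsupp.equivFunOnFinite.symm v) (1 : k)) a = 0) ↔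
        ∀ i, ∑ j, c i j * (v j : k) = 0) ∧
    (∀ v w : Fin n → ℕ, (∀ i, ∑ j, c i j * (v j : k) = 0) →
      (∀ i, ∑ j, c i j * (w j : k) = 0) →
      (∀ i, ∑ j, c i j * (((v + w) j : ℕ) : k) = 0)) ∧
    {z : MvPolynomial (Fin n) k | ∀ a, br z a = 0} =
      ↑(Submodule.span k {m : MvPolynomial (Fin n) k |
        ∃ v : Fin n → ℕ, (∀ i, ∑ j, c i j * (v j : k) = 0) ∧
          m = monomial (Finsupp.equivFunOnFinite.symm v) (1 : k)}) := by
  have hcoe : ∀ (v : Fin n → ℕ) (j : Fin n),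
      ((Finsupp.equivFunOnFinite.symm v) j : ℕ) = v j := fun v j => rfl
  -- characterization of central monomials
  have hchar : ∀ d : Fin n →₀ ℕ,
      (∀ a, br (monomial d (1 : k)) a = 0) ↔ ∀ i, ∑ j, c i j * (d j : k) = 0 := by
    intro d
    constructor
    · intro hcen i
      have hkey := key_monomial c h hX d i
      rw [hcen (X i)] at hkey
      have hne : (monomial d 1 : MvPolynomial (Fin n) k) * X i ≠ 0 := by
        rw [show (X i : MvPolynomial (Fin n) k) = monomial (Finsupp.single i 1) 1 from rfl,
          monomial_mul, mul_one]
        exact fun hc0 => one_ne_zero ((monomial_eq_zero).1 hc0)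
      have : (∑ j, c j i * (d j : k)) = 0 := by
        rcases smul_eq_zero.1 hkey.symm with h0 | h0
        · exact h0
        · exact absurd h0 hne
      rw [← neg_eq_zero, ← Finset.sum_neg_distrib, ← this]
      refine Finset.sum_congr rfl fun j _ => ?_
      rw [hskew i j]; ring
    · intro hc
      exact mono_center c h hX d hc hskew
  refine ⟨?_, ?_, ?_⟩
  · intro v
    simpa [hcoe] using hchar (Finsupp.equivFunOnFinite.symm v)
  · intro v w hv hw i
    have : ∀ j : Fin n, (((v + w) j : ℕ) : k) = (v j : k) + (w j : k) := by
      intro j; simp [Pi.add_apply]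
    simp only [this, mul_add, Finset.sum_add_distrib, hv i, hw i, add_zero]
  · ext z
    simp only [Set.mem_setOf_eq, SetLike.mem_coe]
    constructor
    · intro hz
      -- every monomial of z is central
      have hsupp : ∀ d ∈ z.support, ∀ i, ∑ j, c i j * (d j : k) = 0 := by
        intro d hd i
        have hzi : br z (X i) = 0 := hz (X i)
        -- express br z (X i) as sum over support
        have hrepr : br z (X i) = ∑ w ∈ z.support,
            (coeff w z * ∑ j, c j i * (w j : k)) •
              (monomial (w + Finsupp.single i 1) (1 : k)) := by
          conv_lhs => rw [← support_sum_monomial_coeff z]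
          have : br (∑ w ∈ z.support, monomial w (coeff w z)) (X i)
              = ∑ w ∈ z.support, br (monomial w (coeff w z)) (X i) := by
            induction z.support using Finset.induction_on with
            | empty =>
              simp only [Finset.sum_empty]
              have h0 : br (0 : MvPolynomial (Fin n) k) (X i) = 0 := by
                have := h.2.2.1 (0 : k) 0 (X i)
                simpa using this
              exact h0
            | insert _ _ hni ih =>
              rw [Finset.sum_insert hni, Finset.sum_insert hni, h.1, ih]
          rw [this]
          refine Finset.sum_congr rfl fun w _ => ?_
          have : (monomial w (coeff w z) : MvPolynomial (Fin n) k)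
              = coeff w z • monomial w 1 := by
            rw [smul_monomial, smul_eq_mul, mul_one]
          rw [this, h.2.2.1, key_monomial c h hX w i, smul_smul,
            show (X i : MvPolynomial (Fin n) k) = monomial (Finsupp.single i 1) 1 from rfl,
            monomial_mul, mul_one]
        -- apply coeff (d + single i 1)
        have hco := congrArg (coeff (d + Finsupp.single i 1)) hrepr
        rw [hzi] at hco
        simp only [coeff_zero, coeff_sum, coeff_smul, coeff_monomial] at hco
        rw [Finset.sum_eq_single d] at hco
        · simp only [if_pos rfl, if_true, eq_self_iff_true, smul_eq_mul, mul_one] at hco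
          have hcd : coeff d z ≠ 0 := mem_support_iff.1 hd
          have hs : (∑ j, c j i * (d j : k)) = 0 := by
            rcases mul_eq_zero.1 hco.symm with h0 | h0
            · exact absurd h0 hcd
            · exact h0
          rw [← neg_eq_zero, ← Finset.sum_neg_distrib, ← hs]
          refine Finset.sum_congr rfl fun j _ => ?_
          rw [hskew i j]; ring
        · intro w _ hwd
          have hne : w + Finsupp.single i 1 ≠ d + Finsupp.single i 1 := by
            intro heq; exact hwd (add_right_cancel heq)
          rw [if_neg hne, smul_zero]
        · intro hdn; exact absurd hd hdn
      -- now z is in the span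
      rw [← support_sum_monomial_coeff z]
      refine Submodule.sum_mem _ fun d hd => ?_
      have : (monomial d (coeff d z) : MvPolynomial (Fin n) k)
          = coeff d z • monomial d 1 := by
        rw [smul_monomial, smul_eq_mul, mul_one]
      rw [this]
      refine Submodule.smul_mem _ _ (Submodule.subset_span ?_)
      refine ⟨fun j => d j, fun i => by simpa using hsupp d hd i, ?_⟩
      rw [Finsupp.equivFunOnFinite_symm_coe]
    · intro hz
      -- the center is a submodule containing the generators
      let Z : Submodule k (MvPolynomial (Fin n) k) :=
        { carrier := {z | ∀ a, br z a = 0}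
          add_mem' := by
            intro x y hx hy a
            rw [h.1, hx a, hy a, add_zero]
          zero_mem' := by
            intro a
            have := h.2.2.1 (0 : k) 0 a
            simpa using this
          smul_mem' := by
            intro r x hx a
            rw [h.2.2.1, hx a, smul_zero] }
      have hle : Submodule.span k {m : MvPolynomial (Fin n) k |
          ∃ v : Fin n → ℕ, (∀ i, ∑ j, c i j * (v j : k) = 0) ∧
            m = monomial (Finsupp.equivFunOnFinite.symm v) (1 : k)} ≤ Z := by
        rw [Submodule.span_le]
        rintro m ⟨v, hv, rfl⟩
        intro a
        exact mono_center c h hX _ (fun i => by simpa [hcoe] using hv i) hskew a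
      exact hle hz
end

section
/- Let A be a Poisson domain with Poisson derivation α, and let B = A[t; α]_P be the Poisson Ore extension with bracket {a, b} = {a,b}_A and {a, t} = α(a)·t for a, b ∈ A. Then the Poisson center of B equals ⊕_{i≥0} N(iα)·tⁱ, where N(iα) = {y ∈ A : α(y) = 0 and {y, a} = i·α(a)·y for all a ∈ A}. -/
open Polynomial

/-- Let `A` be a Poisson domain with Poisson derivation `α`, and let
`B = A[t; α]_P` be the Poisson Ore extension (so `{a,b} = {a,b}_A` and
`{a,t} = α(a)·t`). Then the Poisson center of `B` is `⊕_{i≥0} N(iα)·tⁱ`, where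
`N(iα) = {y ∈ ker α : {y,a} = i·α(a)·y for all a}`. -/
theorem stmt14 {A : Type*} [CommRing A] [IsDomain A]
    (brA : A → A → A) (hA : IsPoissonBr brA)
    (α : A → A)
    (hadd : ∀ a b, α (a + b) = α a + α b)
    (hmul : ∀ a b, α (a * b) = α a * b + a * α b)
    (hbrk : ∀ a b, α (brA a b) = brA (α a) b + brA a (α b))
    (brB : Polynomial A → Polynomial A → Polynomial A) (hB : IsPoissonBr brB)
    (hC : ∀ a b : A, brB (C a) (C b) = C (brA a b))
    (hT : ∀ a : A, brB (C a) X = C (α a) * X) :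
    {q : Polynomial A | ∀ r, brB q r = 0} =
      {q : Polynomial A | ∀ i : ℕ,
        α (q.coeff i) = 0 ∧ ∀ a : A, brA (q.coeff i) a = i • (α a * q.coeff i)} := by
  classical
  obtain ⟨lA, rA, altA, antiA, -, leibA⟩ := hA
  obtain ⟨lB, rB, altB, antiB, -, leibB⟩ := hB
  have α0 : α 0 = 0 := by
    have h := hadd 0 0
    rw [add_zero] at h
    exact (right_eq_add.mp h)
  have α1 : α 1 = 0 := by
    have h := hmul 1 1
    rw [mul_one, one_mul, mul_one] at h
    exact (right_eq_add.mp h)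
  have brA0l : ∀ b, brA 0 b = 0 := by
    intro b
    have h := lA 0 0 b
    rw [add_zero] at h
    exact (right_eq_add.mp h)
  have brA1r : ∀ a, brA a 1 = 0 := by
    intro a
    have h := leibA a 1 1
    rw [mul_one, one_mul, mul_one] at h
    exact (right_eq_add.mp h)
  have brB0l : ∀ r, brB 0 r = 0 := by
    intro r
    have h := lB 0 0 r
    rw [add_zero] at h
    exact (right_eq_add.mp h)
  have brB0r : ∀ r, brB r 0 = 0 := by
    intro r
    have h := rB r 0 0
    rw [add_zero] at h
    exact (right_eq_add.mp h)
  have brB1r : ∀ r, brB r 1 = 0 := by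
    intro r
    have h := leibB r 1 1
    rw [mul_one, one_mul, mul_one] at h
    exact (right_eq_add.mp h)
  have brB1l : ∀ r, brB 1 r = 0 := by
    intro r
    rw [antiB, brB1r, neg_zero]
  have leibL : ∀ a b c, brB (a * b) c = brB a c * b + a * brB b c := by
    intro a b c
    rw [antiB (a * b) c, leibB c a b, antiB a c, antiB b c]
    ring
  have hCXpow : ∀ (a : A) (m : ℕ), brB (C a) (X ^ m) = C ((m : A) * α a) * X ^ m := by
    intro a m
    induction m with
    | zero => simp [brB1r]
    | succ m ih =>
      rw [pow_succ, leibB, ih, hT]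
      have e : (((m : ℕ) + 1 : ℕ) : A) * α a = (m : A) * α a + α a := by push_cast; ring
      rw [e, map_add]
      ring
  have hXXpow : ∀ m : ℕ, brB X (X ^ m) = 0 := by
    intro m
    induction m with
    | zero => simpa using brB1r X
    | succ m ih => rw [pow_succ, leibB, ih, altB X]; ring
  have hXpXp : ∀ n m : ℕ, brB (X ^ n) (X ^ m) = 0 := by
    intro n m
    induction n with
    | zero => simpa using brB1l (X ^ m)
    | succ n ih => rw [pow_succ, leibL, ih, hXXpow]; ring
  have mono : ∀ (a b : A) (n m : ℕ),
      brB (C a * X ^ n) (C b * X ^ m) =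
        C (brA a b + (m : A) * (α a * b) - (n : A) * (α b * a)) * X ^ (n + m) := by
    intro a b n m
    rw [leibL, leibB, leibB, hC, hCXpow, hXpXp, antiB (X ^ n) (C b), hCXpow]
    simp only [map_add, map_sub, map_mul, mul_zero, add_zero, pow_add]
    ring
  have brsumL : ∀ {ι : Type} (s : Finset ι) (f : ι → Polynomial A) (r : Polynomial A),
      brB (∑ i ∈ s, f i) r = ∑ i ∈ s, brB (f i) r := by
    intro ι s f r
    induction s using Finset.induction with
    | empty => simpa using brB0l r
    | insert _ _ hns ih => rw [Finset.sum_insert hns, Finset.sum_insert hns, lB, ih]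
  have brsumR : ∀ {ι : Type} (s : Finset ι) (f : ι → Polynomial A) (r : Polynomial A),
      brB r (∑ i ∈ s, f i) = ∑ i ∈ s, brB r (f i) := by
    intro ι s f r
    induction s using Finset.induction with
    | empty => simpa using brB0r r
    | insert _ _ hns ih => rw [Finset.sum_insert hns, Finset.sum_insert hns, rB, ih]
  have general : ∀ (q : Polynomial A) (b : A) (m : ℕ),
      brB q (C b * X ^ m) = ∑ i ∈ q.support,
        C (brA (q.coeff i) b + (m : A) * (α (q.coeff i) * b)
            - (i : A) * (α b * q.coeff i)) * X ^ (i + m) := by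
    intro q b m
    conv_lhs => rw [q.as_sum_support_C_mul_X_pow]
    rw [brsumL]
    exact Finset.sum_congr rfl fun i _ => mono _ _ _ _
  ext q
  simp only [Set.mem_setOf_eq]
  constructor
  · intro h i
    constructor
    · -- α (q.coeff i) = 0, from brB q X = 0
      by_cases hi : i ∈ q.support
      · have h1 := h X
        rw [show (X : Polynomial A) = C (1 : A) * X ^ 1 by rw [map_one, one_mul, pow_one]] at h1
        rw [general] at h1
        have h2 := congrArg (fun p => p.coeff (i + 1)) h1
        simp only [finset_sum_coeff, coeff_C_mul, coeff_X_pow, coeff_zero] at h2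
        rw [Finset.sum_eq_single i (fun j _ hji => by
              rw [if_neg (by omega), mul_zero])
            (fun hni => absurd hi hni)] at h2
        rw [if_pos rfl, mul_one] at h2
        simpa [brA1r, α1] using h2
      · rw [notMem_support_iff.mp hi, α0]
    · -- bracket condition, from brB q (C a) = 0
      intro a
      by_cases hi : i ∈ q.support
      · have h1 := h (C a)
        rw [show (C a : Polynomial A) = C a * X ^ 0 by rw [pow_zero, mul_one]] at h1
        rw [general] at h1
        have h2 := congrArg (fun p => p.coeff i) h1
        simp only [finset_sum_coeff, coeff_C_mul, coeff_X_pow, coeff_zero, add_zero] at h2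
        rw [Finset.sum_eq_single i (fun j _ hji => by
              rw [if_neg (by omega), mul_zero])
            (fun hni => absurd hi hni)] at h2
        rw [if_pos rfl, mul_one] at h2
        rw [Nat.cast_zero, zero_mul, add_zero] at h2
        rw [nsmul_eq_mul, ← sub_eq_zero]
        exact h2
      · rw [notMem_support_iff.mp hi, brA0l, mul_zero, smul_zero]
  · intro h r
    conv_lhs => rw [r.as_sum_support_C_mul_X_pow]
    rw [brsumR]
    apply Finset.sum_eq_zero
    intro m _
    rw [general]
    apply Finset.sum_eq_zero
    intro j _
    have h1 := (h j).1
    have h2 := (h j).2 (r.coeff m)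
    rw [nsmul_eq_mul] at h2
    have e : brA (q.coeff j) (r.coeff m) + (m : A) * (α (q.coeff j) * r.coeff m)
        - (j : A) * (α (r.coeff m) * q.coeff j) = 0 := by
      rw [h1, h2]; ring
    rw [e, map_zero, zero_mul]
end

section
/- Let A be a Poisson domain over a field k of characteristic p > 0 with trivial Poisson bracket, and let β be a nonzero derivation of A. Let B = A[t; 0, β]_P, i.e., A[t] with bracket determined by {a, b} = 0 and {a, t} = β(a) for a, b ∈ A. Then the Poisson center of B equals A^β[t^p], where A^β = ker β. -/
open Polynomial

noncomputable def Dbeta {A : Type*} [CommRing A] (β : A → A) (q : Polynomial A) : Polynomial A :=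
  q.sum fun n a => C (β a) * X ^ n

lemma coeff_Dbeta {A : Type*} [CommRing A] (β : A → A) (h0 : β 0 = 0)
    (q : Polynomial A) (i : ℕ) : (Dbeta β q).coeff i = β (q.coeff i) := by
  rw [Dbeta, Polynomial.sum_def, Polynomial.finset_sum_coeff]
  simp only [coeff_C_mul, coeff_X_pow, mul_ite, mul_one, mul_zero]
  rw [Finset.sum_ite_eq q.support i (fun n => β (q.coeff n))]
  split
  · rfl
  · rw [Polynomial.notMem_support_iff.mp ‹_›, h0]

lemma Dbeta_add {A : Type*} [CommRing A] (β : A → A)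
    (hadd : ∀ a b, β (a + b) = β a + β b) (h0 : β 0 = 0) (q r : Polynomial A) :
    Dbeta β (q + r) = Dbeta β q + Dbeta β r := by
  ext i
  simp [coeff_Dbeta β h0, hadd]

lemma Dbeta_C_mul_X_pow {A : Type*} [CommRing A] (β : A → A) (h0 : β 0 = 0)
    (a : A) (i : ℕ) : Dbeta β (C a * X ^ i) = C (β a) * X ^ i := by
  ext n
  rw [coeff_Dbeta β h0]
  simp only [coeff_C_mul, coeff_X_pow, mul_ite, mul_one, mul_zero]
  split <;> simp [h0]

lemma key_lemma {A : Type*} [CommRing A] (β : A → A)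
    (hadd : ∀ a b, β (a + b) = β a + β b)
    (brB : Polynomial A → Polynomial A → Polynomial A) (hB : IsPoissonBr brB)
    (hC : ∀ a b : A, brB (C a) (C b) = 0)
    (hT : ∀ a : A, brB (C a) X = C (β a)) :
    ∀ q r, brB q r = Dbeta β q * derivative r - derivative q * Dbeta β r := by
  obtain ⟨h1, h2, h3, h4, h5, h6⟩ := hB
  have h0 : β 0 = 0 := by
    have h := hadd 0 0
    rw [add_zero] at h
    exact (left_eq_add.mp h)
  have brone : ∀ x, brB x 1 = 0 := by
    intro x
    have h := h6 x 1 1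
    rw [mul_one, mul_one, one_mul] at h
    exact left_eq_add.mp h
  have h6' : ∀ a b c, brB (a * b) c = brB a c * b + a * brB b c := by
    intro a b c
    rw [h4 (a * b) c, h6 c a b, h4 a c, h4 b c]
    ring
  have brCXpow : ∀ (n : ℕ) (a : A), brB (C a) (X ^ n) = C (β a) * derivative (X ^ n) := by
    intro n a
    induction n with
    | zero => simp [brone]
    | succ n ih =>
      rw [pow_succ, h6, ih, hT a, derivative_mul, derivative_X]
      ring
  have brXXpow : ∀ n : ℕ, brB X (X ^ n) = 0 := by
    intro n
    induction n with
    | zero => simpa using brone X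
    | succ n ih =>
      rw [pow_succ, h6, ih, h3 X]
      ring
  have brXpowXpow : ∀ i j : ℕ, brB (X ^ i) (X ^ j) = 0 := by
    intro i j
    induction i with
    | zero =>
      rw [pow_zero, h4, brone, neg_zero]
    | succ i ih =>
      rw [pow_succ, h6', ih, brXXpow]
      ring
  intro q r
  induction q using Polynomial.induction_on' with
  | add f g hf hg =>
    rw [h1, hf, hg, derivative_add, Dbeta_add β hadd h0]
    ring
  | monomial i a =>
    induction r using Polynomial.induction_on' with
    | add f g hf hg =>
      rw [h2, hf, hg, derivative_add, Dbeta_add β hadd h0]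
      ring
    | monomial j b =>
      rw [← C_mul_X_pow_eq_monomial, ← C_mul_X_pow_eq_monomial,
        Dbeta_C_mul_X_pow β h0, Dbeta_C_mul_X_pow β h0,
        derivative_C_mul, derivative_C_mul]
      have e1 : brB (C a) (C b * X ^ j) = C b * (C (β a) * derivative (X ^ j)) := by
        rw [h6, hC, brCXpow]
        ring
      have e2 : brB (X ^ i) (C b * X ^ j) = -(C (β b) * derivative (X ^ i)) * X ^ j := by
        rw [h6, h4 (X ^ i) (C b), brCXpow, brXpowXpow]
        ring
      rw [h6', e1, e2]
      ring

/-- Let `A` be a domain of characteristic `p > 0` with trivial Poisson bracket and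
`β ≠ 0` a derivation of `A`. In the Poisson Ore extension `B = A[t; 0, β]_P`
(so `{a,b} = 0` and `{a,t} = β(a)` for `a, b ∈ A`), the Poisson center equals
`A^β[t^p]`: those polynomials whose coefficients are killed by `β` and are
supported in degrees divisible by `p`. -/
theorem stmt15 {A : Type*} [CommRing A] [IsDomain A] (p : ℕ) (hp : 0 < p) [CharP A p]
    (β : A → A)
    (hadd : ∀ a b, β (a + b) = β a + β b)
    (hmul : ∀ a b, β (a * b) = β a * b + a * β b)
    (hβ : β ≠ 0)
    (brB : Polynomial A → Polynomial A → Polynomial A) (hB : IsPoissonBr brB)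
    (hC : ∀ a b : A, brB (C a) (C b) = 0)
    (hT : ∀ a : A, brB (C a) X = C (β a)) :
    {q : Polynomial A | ∀ r, brB q r = 0} =
      {q : Polynomial A | ∀ i : ℕ, β (q.coeff i) = 0 ∧ (q.coeff i ≠ 0 → p ∣ i)} := by
  have h0 : β 0 = 0 := by
    have h := hadd 0 0
    rw [add_zero] at h
    exact (left_eq_add.mp h)
  have h1' : β 1 = 0 := by
    have h := hmul 1 1
    rw [mul_one, mul_one, one_mul] at h
    exact left_eq_add.mp h
  have key := key_lemma β hadd brB hB hC hT
  have DbetaX : Dbeta β X = 0 := by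
    have : (X : Polynomial A) = C (1 : A) * X ^ 1 := by simp
    rw [this, Dbeta_C_mul_X_pow β h0, h1']
    simp
  have DbetaC : ∀ a : A, Dbeta β (C a) = C (β a) := by
    intro a
    have : (C a : Polynomial A) = C a * X ^ 0 := by simp
    rw [this, Dbeta_C_mul_X_pow β h0]
    simp
  ext q
  simp only [Set.mem_setOf_eq]
  constructor
  · intro hq
    have hD : Dbeta β q = 0 := by
      have h := hq X
      rwa [key q X, derivative_X, mul_one, DbetaX, mul_zero, sub_zero] at h
    obtain ⟨a, ha⟩ : ∃ a, β a ≠ 0 := by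
      by_contra h
      push_neg at h
      exact hβ (funext fun a => h a)
    have hd : derivative q = 0 := by
      have h := hq (C a)
      rw [key, derivative_C, mul_zero, zero_sub, neg_eq_zero, DbetaC] at h
      rcases mul_eq_zero.mp h with h | h
      · exact h
      · exact absurd (C_eq_zero.mp h) ha
    intro i
    refine ⟨?_, ?_⟩
    · have h := congrArg (fun q => Polynomial.coeff q i) hD
      simpa [coeff_Dbeta β h0] using h
    · intro hne
      rcases Nat.eq_zero_or_pos i with rfl | hi
      · exact dvd_zero p
      · have hc := congrArg (fun q => Polynomial.coeff q (i - 1)) hd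
        simp only [coeff_derivative, coeff_zero] at hc
        have hi1 : i - 1 + 1 = i := Nat.succ_pred_eq_of_pos hi
        rw [hi1] at hc
        rcases mul_eq_zero.mp hc with h | h
        · exact absurd h hne
        · refine (CharP.cast_eq_zero_iff A p i).mp ?_
          rw [← hi1, Nat.cast_add, Nat.cast_one]
          exact h
  · intro hq r
    rw [key]
    have hD : Dbeta β q = 0 := by
      ext i
      simp [coeff_Dbeta β h0, (hq i).1]
    have hd : derivative q = 0 := by
      ext n
      rw [coeff_derivative, coeff_zero]
      rcases eq_or_ne (q.coeff (n + 1)) 0 with h | h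
      · rw [h, zero_mul]
      · have hdvd := (hq (n + 1)).2 h
        have hcast : ((n + 1 : ℕ) : A) = 0 := (CharP.cast_eq_zero_iff A p (n + 1)).mpr hdvd
        push_cast at hcast
        rw [hcast, mul_zero]
    rw [hD, hd, zero_mul, zero_mul, sub_zero]
end

section
/- Let P = k[x_1, x_2, x_3] over a field k of characteristic p > 3 with Jacobian Poisson structure given by potential Ω = x_1³, i.e., {x_1,x_2} = 0, {x_1,x_3} = 0, {x_2,x_3} = 3x_1². Then the Poisson center of P equals k[x_1, x_2^p, x_3^p]. -/
open MvPolynomial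

section Stmt16Aux

variable {k : Type*} [CommRing k]

/-- The Jacobian bracket with potential `X 0 ^ 3`. -/
noncomputable def jacBr (f g : MvPolynomial (Fin 3) k) : MvPolynomial (Fin 3) k :=
  3 * X 0 ^ 2 * (pderiv 1 f * pderiv 2 g - pderiv 2 f * pderiv 1 g)

/-- Two biderivation-like maps agreeing on the variables agree everywhere. -/
lemma stmt16_detLemma (d e : MvPolynomial (Fin 3) k → MvPolynomial (Fin 3) k)
    (hda : ∀ a b, d (a + b) = d a + d b)
    (hds : ∀ (r : k) (a : MvPolynomial (Fin 3) k), d (r • a) = r • d a)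
    (hdm : ∀ a b, d (a * b) = d a * b + a * d b)
    (hea : ∀ a b, e (a + b) = e a + e b)
    (hes : ∀ (r : k) (a : MvPolynomial (Fin 3) k), e (r • a) = r • e a)
    (hem : ∀ a b, e (a * b) = e a * b + a * e b)
    (hX : ∀ i, d (X i) = e (X i)) : ∀ f, d f = e f := by
  have hd1 : d 1 = 0 := by
    have h := hdm 1 1
    rw [mul_one, mul_one, one_mul] at h
    exact (left_eq_add.mp h)
  have he1 : e 1 = 0 := by
    have h := hem 1 1
    rw [mul_one, mul_one, one_mul] at h
    exact (left_eq_add.mp h)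
  have hdC : ∀ r : k, d (C r) = 0 := by
    intro r
    have : (C r : MvPolynomial (Fin 3) k) = r • 1 := by
      rw [smul_eq_C_mul, mul_one]
    rw [this, hds, hd1, smul_zero]
  have heC : ∀ r : k, e (C r) = 0 := by
    intro r
    have : (C r : MvPolynomial (Fin 3) k) = r • 1 := by
      rw [smul_eq_C_mul, mul_one]
    rw [this, hes, he1, smul_zero]
  intro f
  induction f using MvPolynomial.induction_on with
  | C a => rw [hdC, heC]
  | add f g hf hg => rw [hda, hea, hf, hg]
  | mul_X f i hf => rw [hdm, hem, hf, hX]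

lemma jacBr_add_left (a b g : MvPolynomial (Fin 3) k) :
    jacBr (a + b) g = jacBr a g + jacBr b g := by
  simp only [jacBr, map_add]; ring

lemma jacBr_add_right (f a b : MvPolynomial (Fin 3) k) :
    jacBr f (a + b) = jacBr f a + jacBr f b := by
  simp only [jacBr, map_add]; ring

lemma jacBr_smul_left (r : k) (a g : MvPolynomial (Fin 3) k) :
    jacBr (r • a) g = r • jacBr a g := by
  simp only [jacBr, smul_eq_C_mul, pderiv_C_mul]; ring

lemma jacBr_smul_right (r : k) (f a : MvPolynomial (Fin 3) k) :
    jacBr f (r • a) = r • jacBr f a := by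
  simp only [jacBr, smul_eq_C_mul, pderiv_C_mul]; ring

lemma jacBr_mul_left (a b g : MvPolynomial (Fin 3) k) :
    jacBr (a * b) g = jacBr a g * b + a * jacBr b g := by
  simp only [jacBr, pderiv_mul]; ring

lemma jacBr_mul_right (f a b : MvPolynomial (Fin 3) k) :
    jacBr f (a * b) = jacBr f a * b + a * jacBr f b := by
  simp only [jacBr, pderiv_mul]; ring

/-- Coefficient formula for partial derivatives. -/
lemma stmt16_coeff_pderiv (i : Fin 3) (m : Fin 3 →₀ ℕ) (f : MvPolynomial (Fin 3) k) :
    coeff m (pderiv i f) = ((m i + 1 : ℕ) : k) * coeff (m + Finsupp.single i 1) f := by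
  induction f using MvPolynomial.induction_on' with
  | add f g hf hg => simp [hf, hg, mul_add]
  | monomial s a =>
    rw [pderiv_monomial, coeff_monomial, coeff_monomial]
    by_cases hs : s = m + Finsupp.single i 1
    · subst hs
      rw [if_pos rfl, if_pos (add_tsub_cancel_right _ _)]
      push_cast
      simp [Finsupp.add_apply, Finsupp.single_eq_same]
      ring
    · rw [if_neg hs, mul_zero]
      rcases Nat.eq_zero_or_pos (s i) with h0 | h0
      · split_ifs <;> simp [h0]
      · rw [if_neg]
        intro heq
        exact hs (by rw [← heq, tsub_add_cancel_of_le (Finsupp.single_le_iff.mpr h0)])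

end Stmt16Aux

/-- Let `P = k[x₁,x₂,x₃]` over a field of characteristic `p > 3` with the Jacobian
Poisson structure of potential `Ω = x₁³`, i.e. `{x₁,x₂} = 0`, `{x₁,x₃} = 0`,
`{x₂,x₃} = 3x₁²`. Then the Poisson center of `P` is `k[x₁, x₂^p, x₃^p]`. -/
theorem stmt16 {k : Type*} [Field k] (p : ℕ) [CharP k p] (hp : 3 < p) (hpp : p.Prime)
    (br : MvPolynomial (Fin 3) k → MvPolynomial (Fin 3) k → MvPolynomial (Fin 3) k)
    (h : IsPoissonBracket k br)
    (h12 : br (X 0) (X 1) = 0)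
    (h13 : br (X 0) (X 2) = 0)
    (h23 : br (X 1) (X 2) = 3 * X 0 ^ 2) :
    {z : MvPolynomial (Fin 3) k | ∀ a, br z a = 0} =
      ↑(Algebra.adjoin k ({X 0, X 1 ^ p, X 2 ^ p} : Set (MvPolynomial (Fin 3) k))) := by
  obtain ⟨ha1, ha2, hs1, hs2, halt, hskew, hjac, hlei⟩ := h
  -- the bracket of variables
  have tbl : ∀ i j : Fin 3, br (X i) (X j) = jacBr (X i) (X j) := by
    have e10 : br (X 1) (X 0) = 0 := by rw [hskew, h12, neg_zero]
    have e20 : br (X 2) (X 0) = 0 := by rw [hskew, h13, neg_zero]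
    have e21 : br (X 2) (X 1) = -(3 * X 0 ^ 2) := by rw [hskew, h23]
    intro i j
    fin_cases i <;> fin_cases j <;>
      simp [jacBr, h12, h13, h23, e10, e20, e21, halt, pderiv_X, Pi.single_apply] <;> ring
  -- Leibniz rule in the first slot
  have brm1 : ∀ a b g, br (a * b) g = br a g * b + a * br b g := by
    intro a b g
    rw [hskew (a * b) g, hlei, hskew a g, hskew b g]
    ring
  -- the master formula
  have step1 : ∀ (i : Fin 3), ∀ g, br (X i) g = jacBr (X i) g := fun i =>
    stmt16_detLemma _ _ (fun a b => ha2 (X i) a b) (fun r a => hs2 r (X i) a)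
      (fun a b => hlei (X i) a b) (jacBr_add_right _) (jacBr_smul_right · _)
      (jacBr_mul_right _) (fun j => tbl i j)
  have master : ∀ f g, br f g = jacBr f g := by
    intro f g
    exact stmt16_detLemma (fun f => br f g) (fun f => jacBr f g)
      (fun a b => ha1 a b g) (fun r a => hs1 r a g) (fun a b => brm1 a b g)
      (fun a b => jacBr_add_left a b g) (fun r a => jacBr_smul_left r a g)
      (fun a b => jacBr_mul_left a b g) (fun i => step1 i g) f
  -- nonzeroness of 3 X₀²
  have h3k : (3 : k) ≠ 0 := by
    intro h0
    have := (CharP.cast_eq_zero_iff k p 3).mp (by exact_mod_cast h0)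
    have := Nat.le_of_dvd (by norm_num) this
    omega
  have h3X : (3 * X 0 ^ 2 : MvPolynomial (Fin 3) k) ≠ 0 := by
    have : (3 : MvPolynomial (Fin 3) k) = C (3 : k) := by
      rw [map_ofNat]
    rw [this]
    exact mul_ne_zero (fun hc => h3k (by simpa using hc)) (pow_ne_zero _ (X_ne_zero _))
  ext z
  simp only [Set.mem_setOf_eq, SetLike.mem_coe]
  constructor
  · intro hz
    -- the partial derivatives vanish
    have hD1 : pderiv 1 z = 0 := by
      have e2 := hz (X 2)
      rw [master] at e2
      have : jacBr z (X 2) = 3 * X 0 ^ 2 * pderiv 1 z := by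
        simp [jacBr, pderiv_X, Pi.single_apply]
      rw [this] at e2
      exact (mul_eq_zero.mp e2).resolve_left h3X
    have hD2 : pderiv 2 z = 0 := by
      have e1 := hz (X 1)
      rw [master] at e1
      have : jacBr z (X 1) = 3 * X 0 ^ 2 * -pderiv 2 z := by
        simp [jacBr, pderiv_X, Pi.single_apply]
      rw [this] at e1
      have := (mul_eq_zero.mp e1).resolve_left h3X
      simpa using this
    -- support divisibility
    have key : ∀ (i : Fin 3), pderiv i z = 0 → ∀ m ∈ z.support, p ∣ m i := by
      intro i hz0 m hm
      by_contra hnd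
      have hpos : 1 ≤ m i := Nat.one_le_iff_ne_zero.mpr (by
        rintro h0; exact hnd (h0 ▸ dvd_zero p))
      have hco := stmt16_coeff_pderiv i (m - Finsupp.single i 1) z
      rw [hz0, coeff_zero] at hco
      have hmm : (m - Finsupp.single i 1) + Finsupp.single i 1 = m :=
        tsub_add_cancel_of_le (Finsupp.single_le_iff.mpr hpos)
      rw [hmm] at hco
      have h1 := DFunLike.congr_fun hmm i
      simp only [Finsupp.add_apply, Finsupp.single_eq_same] at h1
      rw [h1] at hco
      have hc0 : (m i : k) ≠ 0 := fun hc => hnd ((CharP.cast_eq_zero_iff k p _).mp hc)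
      exact (mem_support_iff.mp hm) ((mul_eq_zero.mp hco.symm).resolve_left hc0)
    rw [z.as_sum]
    apply sum_mem
    intro m hm
    obtain ⟨b, hb⟩ := key 1 hD1 m hm
    obtain ⟨c, hc⟩ := key 2 hD2 m hm
    have hmon : monomial m (coeff m z) =
        C (coeff m z) * (X 0 ^ m 0 * (X 1 ^ m 1 * X 2 ^ m 2)) := by
      rw [monomial_eq, Finsupp.prod_fintype _ _ (fun i => pow_zero _), Fin.prod_univ_three]
      ring
    rw [hmon]
    refine mul_mem ?_ (mul_mem ?_ (mul_mem ?_ ?_))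
    · rw [← MvPolynomial.algebraMap_eq]
      exact Subalgebra.algebraMap_mem _ _
    · exact pow_mem (Algebra.subset_adjoin (by simp)) _
    · rw [hb, pow_mul]
      exact pow_mem (Algebra.subset_adjoin (by simp)) _
    · rw [hc, pow_mul]
      exact pow_mem (Algebra.subset_adjoin (by simp)) _
  · intro hzS a
    -- the adjoined algebra sits in the kernel of both derivations
    have hp0 : ((p : ℕ) : MvPolynomial (Fin 3) k) = 0 := by
      rw [← map_natCast (C : k →+* MvPolynomial (Fin 3) k) p, CharP.cast_eq_zero k p, map_zero]
    let S0 : Subalgebra k (MvPolynomial (Fin 3) k) :=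
      { carrier := {f | pderiv 1 f = 0 ∧ pderiv 2 f = 0}
        mul_mem' := by
          rintro a b ⟨ha1', ha2'⟩ ⟨hb1', hb2'⟩
          constructor <;> simp [pderiv_mul, ha1', ha2', hb1', hb2']
        one_mem' := by constructor <;> simp [pderiv_one]
        add_mem' := by
          rintro a b ⟨ha1', ha2'⟩ ⟨hb1', hb2'⟩
          constructor <;> simp [ha1', ha2', hb1', hb2']
        zero_mem' := by constructor <;> simp
        algebraMap_mem' := by
          intro r
          constructor <;> simp [MvPolynomial.algebraMap_eq, pderiv_C] }
    have hle : Algebra.adjoin k ({X 0, X 1 ^ p, X 2 ^ p} : Set (MvPolynomial (Fin 3) k)) ≤ S0 := by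
      apply Algebra.adjoin_le
      rintro x hx
      simp only [Set.mem_insert_iff, Set.mem_singleton_iff] at hx
      rcases hx with rfl | rfl | rfl
      · exact ⟨pderiv_X_of_ne (by decide), pderiv_X_of_ne (by decide)⟩
      · constructor
        · rw [pderiv_pow, hp0, zero_mul, zero_mul]
        · rw [pderiv_pow, pderiv_X_of_ne (by decide), mul_zero]
      · constructor
        · rw [pderiv_pow, pderiv_X_of_ne (by decide), mul_zero]
        · rw [pderiv_pow, hp0, zero_mul, zero_mul]
    obtain ⟨hD1, hD2⟩ := hle hzS
    rw [master]
    simp [jacBr, hD1, hD2]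
end
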